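/- Let T be a complete first-order theory in a countable relational vocabulary. There are club-many α < κ such that the relation R_EF^α on κ^κ is an equivalence relation, where η R_EF^α ξ holds iff either both A_η↾α and A_ξ↾α fail to model T, or both model T and player II has a winning strategy in EF^κ_ω(A_η↾α, A_ξ↾α). -/

import Mathlib

open Set Cardinal FirstOrder FirstOrder.Language

variable {L : Language}

/-- A set of pairs `g` is (the graph of) a partial isomorphism between the
structures `A` and `B`: it is functional, injective, and preserves all
relations in both directions. -/
def IsPartialIso (A B : L.Structure Ordinal.{0}) (g : Set (Ordinal × Ordinal)) : Prop :=
  (∀ p ∈ g, ∀ q ∈ g, p.1 = q.1 → p.2 = q.2) ∧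
  (∀ p ∈ g, ∀ q ∈ g, p.2 = q.2 → p.1 = q.1) ∧
  ∀ (n : ℕ) (R : L.Relations n) (v : Fin n → Ordinal × Ordinal), (∀ i, v i ∈ g) →
    (A.RelMap R (fun i => (v i).1) ↔ B.RelMap R (fun i => (v i).2))

/-- The moves of player I up to round `n` (as a list). -/
def histMoves (β : ℕ → Ordinal) (n : ℕ) : List Ordinal := (List.range (n + 1)).map β

/-- Legality of I's move at round `n` in the (unrestricted) game `EF^κ_ω`:
moves are ordinals `< κ` and the chosen sets `X_{β_n}` strictly increase. -/
def ILegalAt (κo : Ordinal) (X : Ordinal → Set Ordinal) (β : ℕ → Ordinal) (n : ℕ) : Prop :=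
  β n < κo ∧ (n = 0 → (X (β 0)).Nonempty) ∧ ∀ m, n = m + 1 → X (β m) ⊂ X (β n)

/-- Legality of II's move at round `n` in the (unrestricted) game `EF^κ_ω`:
the chosen partial functions `f_{θ_n}` strictly increase and cover `X_{β_n}`. -/
def IILegalAt (κo : Ordinal) (X : Ordinal → Set Ordinal)
    (Fp : Ordinal → Set (Ordinal × Ordinal)) (β θ : ℕ → Ordinal) (n : ℕ) : Prop :=
  θ n < κo ∧ X (β n) ⊆ Prod.fst '' Fp (θ n) ∧ X (β n) ⊆ Prod.snd '' Fp (θ n) ∧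
    ∀ m, n = m + 1 → Fp (θ m) ⊂ Fp (θ n)

/-- `σ` is a winning strategy for player II in `EF^κ_ω(A,B)`. -/
def IsWinFull (A B : L.Structure Ordinal) (κo : Ordinal) (X : Ordinal → Set Ordinal)
    (Fp : Ordinal → Set (Ordinal × Ordinal)) (σ : List Ordinal → Ordinal) : Prop :=
  ∀ β : ℕ → Ordinal, (∀ n, ILegalAt κo X β n) →
    (∀ n, IILegalAt κo X Fp β (fun k => σ (histMoves β k)) n) ∧
    IsPartialIso A B (⋃ n, Fp (σ (histMoves β n)))

/-- Legality of I's move at round `n` in the restricted game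
`EF^κ_ω(A↾α, B↾α)` : everything lives below `α`. -/
def ILegalResAt (α : Ordinal) (X : Ordinal → Set Ordinal) (β : ℕ → Ordinal) (n : ℕ) : Prop :=
  β n < α ∧ X (β n) ⊆ Set.Iio α ∧ ∀ m, n = m + 1 → X (β m) ⊆ X (β n)

/-- Legality of II's move at round `n` in the restricted game. -/
def IILegalResAt (α : Ordinal) (X : Ordinal → Set Ordinal)
    (Fp : Ordinal → Set (Ordinal × Ordinal)) (β θ : ℕ → Ordinal) (n : ℕ) : Prop :=
  θ n < α ∧ Fp (θ n) ⊆ (Set.Iio α) ×ˢ (Set.Iio α) ∧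
    X (β n) ⊆ Prod.fst '' Fp (θ n) ∧ X (β n) ⊆ Prod.snd '' Fp (θ n) ∧
    ∀ m, n = m + 1 → Fp (θ m) ⊆ Fp (θ n)

/-- `σ` is a winning strategy for player II in the restricted game
`EF^κ_ω(A↾α, B↾α)`. -/
def IsWinRes (A B : L.Structure Ordinal) (α : Ordinal) (X : Ordinal → Set Ordinal)
    (Fp : Ordinal → Set (Ordinal × Ordinal)) (σ : List Ordinal → Ordinal) : Prop :=
  ∀ β : ℕ → Ordinal, (∀ n, ILegalResAt α X β n) →
    (∀ n, IILegalResAt α X Fp β (fun k => σ (histMoves β k)) n) ∧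
    IsPartialIso A B (⋃ n, Fp (σ (histMoves β n)))

/-- `C ⊆ κ` is club in `κ`. -/
def IsClubIn (κ : Cardinal.{0}) (C : Set Ordinal.{0}) : Prop :=
  C ⊆ Set.Iio κ.ord ∧
  (∀ β < κ.ord, ∃ α ∈ C, β < α) ∧
  ∀ B ⊆ C, B.Nonempty → sSup B < κ.ord → sSup B ∈ C

/-- The enumerations `(X_γ)_{γ<κ}` of `P_κ(κ)` and `(f_γ)_{γ<κ}` of all partial
functions with small domain and range are adequate. -/
def GoodEnum (κ : Cardinal.{0}) (X : Ordinal → Set Ordinal)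
    (Fp : Ordinal → Set (Ordinal × Ordinal)) : Prop :=
  (∀ γ < κ.ord, X γ ⊆ Set.Iio κ.ord ∧ #(X γ) < Cardinal.lift.{1} κ) ∧
  (∀ s : Set Ordinal, s ⊆ Set.Iio κ.ord → #s < Cardinal.lift.{1} κ →
    ∃ γ < κ.ord, X γ = s) ∧
  (∀ γ < κ.ord, Fp γ ⊆ (Set.Iio κ.ord) ×ˢ (Set.Iio κ.ord) ∧ #(Fp γ) < Cardinal.lift.{1} κ ∧
    ∀ p ∈ Fp γ, ∀ q ∈ Fp γ, p.1 = q.1 → p.2 = q.2) ∧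
  (∀ g : Set (Ordinal × Ordinal), g ⊆ (Set.Iio κ.ord) ×ˢ (Set.Iio κ.ord) →
    #g < Cardinal.lift.{1} κ → (∀ p ∈ g, ∀ q ∈ g, p.1 = q.1 → p.2 = q.2) →
    ∃ γ < κ.ord, Fp γ = g)
/-- The countable relational vocabulary `{P_m : m < ω}`, where `P_m` has arity
`ar m`. -/
def Lang (ar : ℕ → ℕ) : Language :=
  { Functions := fun _ => Empty
    Relations := fun n => { m : ℕ // ar m = n } }

/-- The structure `A_η` with domain `κ` coded by `η ∈ κ^κ` via a fixed pairing
bijection `π : κ^{<ω} → κ` (Definition 2.1): a tuple `v` satisfies `P_m` iff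
`η (π (m, v)) > 0`. -/
def codedStruct (ar : ℕ → ℕ) (π : ℕ × List Ordinal → Ordinal) (η : Ordinal → Ordinal) :
    (Lang ar).Structure Ordinal where
  funMap := fun f _ => f.elim
  RelMap := fun {n} R v => 0 < η (π (R.1, List.ofFn v))

/-- The restriction `S↾α` of a relational structure with domain the ordinals to
the ordinals below `α`. -/
def restrictStruct {ar : ℕ → ℕ} (S : (Lang ar).Structure Ordinal) (α : Ordinal) :
    (Lang ar).Structure ↥(Set.Iio α) where
  funMap := fun f _ => f.elim
  RelMap := fun {n} R v => S.RelMap R (fun i => (v i : Ordinal))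

/-- `A_η↾α ⊨ T`. -/
def ModelsRes (ar : ℕ → ℕ) (π : ℕ × List Ordinal → Ordinal) (T : (Lang ar).Theory)
    (η : Ordinal → Ordinal) (α : Ordinal) : Prop :=
  @Theory.Model (Lang ar) ↥(Set.Iio α) (restrictStruct (codedStruct ar π η) α) T

/-- The relation `R_EF^α` on `κ^κ`: `η R_EF^α ξ` iff either both `A_η↾α` and
`A_ξ↾α` fail to model `T`, or both model `T` and II has a winning strategy in
`EF^κ_ω(A_η↾α, A_ξ↾α)`. -/
def REF (ar : ℕ → ℕ) (π : ℕ × List Ordinal → Ordinal) (T : (Lang ar).Theory)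
    (X : Ordinal → Set Ordinal) (Fp : Ordinal → Set (Ordinal × Ordinal))
    (α : Ordinal) (η ξ : Ordinal → Ordinal) : Prop :=
  (¬ ModelsRes ar π T η α ∧ ¬ ModelsRes ar π T ξ α) ∨
  (ModelsRes ar π T η α ∧ ModelsRes ar π T ξ α ∧
    ∃ σ, IsWinRes (codedStruct ar π η) (codedStruct ar π ξ) α X Fp σ)


/-!
On an ordinal `α` closed under the operations on the enumerations that produce identity maps,
inverses, compositions, unions, domains and ranges, winning strategies of II in the restricted
games can be manipulated within the games themselves. The identity maps on I's sets win
`EF(A, A)`; inverting II's answers turns a winning strategy in `EF(A, B)` into one in `EF(B, A)`;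
and II wins `EF(A, C)` by letting I play two auxiliary games `EF(A, B)` and `EF(B, C)` against
given winning strategies and answering with the composition of their answers. Since `κ` is
regular and uncountable, the closure points of these operations form a club.
-/

open SetRel

theorem SetRel.inv_iUnion {α β : Type*} {ι : Sort*} (R : ι → SetRel α β) :
    SetRel.inv (⋃ i, R i) = ⋃ i, SetRel.inv (R i) :=
  Set.preimage_iUnion

theorem SetRel.fst_image_inv {α β : Type*} (R : SetRel α β) :
    Prod.fst '' SetRel.inv R = Prod.snd '' R := by
  rw [SetRel.inv, ← Set.image_swap_eq_preimage_swap, Set.image_image]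
  rfl

theorem SetRel.snd_image_inv {α β : Type*} (R : SetRel α β) :
    Prod.snd '' SetRel.inv R = Prod.fst '' R := by
  rw [SetRel.inv, ← Set.image_swap_eq_preimage_swap, Set.image_image]
  rfl

theorem SetRel.mk_inv {α β : Type*} (R : SetRel α β) : #(SetRel.inv R) = #R := by
  rw [SetRel.inv, ← Set.image_swap_eq_preimage_swap]
  exact Cardinal.mk_image_eq Prod.swap_injective

theorem SetRel.functional_comp {α β γ : Type*} {R : SetRel α β} {S : SetRel β γ}
    (hR : ∀ p ∈ R, ∀ q ∈ R, p.1 = q.1 → p.2 = q.2) (hS : ∀ p ∈ S, ∀ q ∈ S, p.1 = q.1 → p.2 = q.2) :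
    ∀ p ∈ R ○ S, ∀ q ∈ R ○ S, p.1 = q.1 → p.2 = q.2 := by
  rintro ⟨a, c⟩ ⟨b, hab, hbc⟩ ⟨a', c'⟩ ⟨b', hab', hbc'⟩ (rfl : a = a')
  exact hS (b, c) hbc (b', c') hbc' (hR (a, b) hab (a, b') hab' rfl)

theorem SetRel.mk_comp_le {α : Type*} {R S : SetRel α α}
    (hRS : ∀ p ∈ R ○ S, ∀ q ∈ R ○ S, p.1 = q.1 → p.2 = q.2) : #(R ○ S) ≤ #R :=
  calc #(R ○ S) = #(Prod.fst '' (R ○ S)) :=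
        (Cardinal.mk_image_eq_of_injOn _ _ fun p hp q hq h => Prod.ext h (hRS p hp q hq h)).symm
    _ ≤ #(Prod.fst '' R) := Cardinal.mk_le_mk_of_subset <| by
        rintro _ ⟨⟨x, z⟩, ⟨y, hxy, -⟩, rfl⟩
        exact ⟨(x, y), hxy, rfl⟩
    _ ≤ #R := Cardinal.mk_image_le

theorem List.exists_eq_map_range_of_isPrefix {α : Type*} [Inhabited α] {P : ℕ → List α}
    (hP : ∀ n, P n <+: P (n + 1)) (hlen : ∀ n, n ≤ (P n).length) :
    ∃ b : ℕ → α, ∀ n, P n = (List.range (P n).length).map b := by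
  have hmono : ∀ m n, m ≤ n → P m <+: P n := fun m n hmn => by
    induction n, hmn using Nat.le_induction with
    | base => exact List.prefix_refl _
    | succ n _ ih => exact ih.trans (hP n)
  refine ⟨fun k => (P (k + 1)).getD k default, fun n => List.ext_getElem (by simp) ?_⟩
  intro i hi _
  have hi' : i < (P (i + 1)).length := lt_of_lt_of_le (Nat.lt_succ_self i) (hlen _)
  simp only [List.getElem_map, List.getElem_range, List.getD_eq_getElem _ _ hi']
  rcases le_total (i + 1) n with h | h
  · exact ((hmono _ _ h).getElem hi').symm
  · exact (hmono _ _ h).getElem hi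

theorem List.getLastD_map_range_succ {α : Type*} (f : ℕ → α) (j : ℕ) (x : α) :
    ((List.range (j + 1)).map f).getLastD x = f j := by
  simp [List.range_succ]

section PartialIso

variable {A B C : L.Structure Ordinal.{0}} {g h : SetRel Ordinal.{0} Ordinal.{0}}

theorem IsPartialIso.mono (hg : IsPartialIso A B g) (hhg : h ⊆ g) : IsPartialIso A B h :=
  ⟨fun p hp q hq => hg.1 p (hhg hp) q (hhg hq), fun p hp q hq => hg.2.1 p (hhg hp) q (hhg hq),
    fun n R v hv => hg.2.2 n R v fun i => hhg (hv i)⟩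

theorem isPartialIso_diag (A : L.Structure Ordinal.{0}) (s : Set Ordinal.{0}) :
    IsPartialIso A A ((fun x => (x, x)) '' s) := by
  refine ⟨?_, ?_, fun n R v hv => ?_⟩
  · rintro _ ⟨x, -, rfl⟩ _ ⟨y, -, rfl⟩ hxy
    exact hxy
  · rintro _ ⟨x, -, rfl⟩ _ ⟨y, -, rfl⟩ hxy
    exact hxy
  · choose x _ hx using hv
    simp only [← hx]

theorem IsPartialIso.inv (hg : IsPartialIso A B g) : IsPartialIso B A (SetRel.inv g) :=
  ⟨fun p hp q hq => hg.2.1 p.swap hp q.swap hq, fun p hp q hq => hg.1 p.swap hp q.swap hq,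
    fun n R v hv => (hg.2.2 n R (fun i => (v i).swap) hv).symm⟩

theorem IsPartialIso.comp (hg : IsPartialIso A B g) (hh : IsPartialIso B C h) :
    IsPartialIso A C (g ○ h) := by
  refine ⟨SetRel.functional_comp hg.1 hh.1, ?_, fun n R v hv => ?_⟩
  · rintro ⟨a, c⟩ ⟨b, hab, hbc⟩ ⟨a', c'⟩ ⟨b', hab', hbc'⟩ (rfl : c = c')
    exact hg.2.1 (a, b) hab (a', b') hab' (hh.2.1 (b, c) hbc (b', c) hbc' rfl)
  · choose b hab hbc using hv
    exact (hg.2.2 n R (fun i => ((v i).1, b i)) hab).trans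
      (hh.2.2 n R (fun i => (b i, (v i).2)) hbc)

end PartialIso

section Game

variable {A B : L.Structure Ordinal.{0}} {α : Ordinal.{0}} {X : Ordinal → Set Ordinal}
  {Fp : Ordinal → Set (Ordinal × Ordinal)} {σ : List Ordinal → Ordinal} {β : ℕ → Ordinal}

theorem histMoves_getLastD (β : ℕ → Ordinal) (n : ℕ) (d : Ordinal) :
    (histMoves β n).getLastD d = β n := by
  simp [histMoves, List.range_succ]

theorem histMoves_congr {β' : ℕ → Ordinal} {n : ℕ} (h : ∀ k ≤ n, β k = β' k) :
    histMoves β n = histMoves β' n :=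
  List.map_congr_left fun k hk => h k (Nat.lt_succ_iff.1 (List.mem_range.1 hk))

theorem IsWinRes.iiLegalResAt (hw : IsWinRes A B α X Fp σ) {n : ℕ}
    (hβ : ∀ m ≤ n, ILegalResAt α X β m) :
    IILegalResAt α X Fp β (fun k => σ (histMoves β k)) n := by
  -- I keeps repeating the move `β n`.
  set β' : ℕ → Ordinal := fun k => β (min k n)
  have hβ' : ∀ m, ILegalResAt α X β' m := by
    intro m
    rcases le_or_gt m n with hm | hm
    · obtain ⟨h1, h2, h3⟩ := hβ m hm
      refine ⟨by simpa [β', hm] using h1, by simpa [β', hm] using h2, fun k hk => ?_⟩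
      simpa [β', hm, show k ≤ n by omega] using h3 k hk
    · obtain ⟨h1, h2, -⟩ := hβ n le_rfl
      refine ⟨by simpa [β', hm.le] using h1, by simpa [β', hm.le] using h2, fun k hk => ?_⟩
      simp [β', hm.le, show n ≤ k by omega]
  have hhist : ∀ k ≤ n, histMoves β' k = histMoves β k := fun k hk =>
    histMoves_congr fun i hi => by simp [β', show i ≤ n by omega]
  obtain ⟨h1, h2, h3, h4, h5⟩ := (hw β' hβ').1 n
  simp only [hhist n le_rfl, β', min_self] at h1 h2 h3 h4
  refine ⟨h1, h2, h3, h4, fun m hm => ?_⟩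
  simpa [hhist n le_rfl, hhist m (by omega)] using h5 m hm

theorem exists_isWinRes_self (hdiag : ∀ a < α, ∃ b < α, Fp b = (fun x => (x, x)) '' X a)
    (A : L.Structure Ordinal.{0}) : ∃ σ, IsWinRes A A α X Fp σ := by
  choose! iD hiD using hdiag
  refine ⟨fun l => iD (l.getLastD 0), fun β hβ => ?_⟩
  have hF : ∀ n, Fp (iD ((histMoves β n).getLastD 0)) = (fun x => (x, x)) '' X (β n) :=
    fun n => by rw [histMoves_getLastD, (hiD _ (hβ n).1).2]
  refine ⟨fun n => ⟨?_, ?_, ?_, ?_, ?_⟩, ?_⟩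
  · beta_reduce
    rw [histMoves_getLastD]
    exact (hiD _ (hβ n).1).1
  · rw [hF]
    rintro _ ⟨x, hx, rfl⟩
    exact ⟨(hβ n).2.1 hx, (hβ n).2.1 hx⟩
  · rw [hF, Set.image_image]
    simp
  · rw [hF, Set.image_image]
    simp
  · rintro m rfl
    rw [hF, hF]
    exact Set.image_mono ((hβ (m + 1)).2.2 m rfl)
  · simp only [hF, ← Set.image_iUnion]
    exact isPartialIso_diag A _

theorem IsWinRes.exists_symm
    (hinv : ∀ a < α, ∃ b < α,
      (∀ p ∈ Fp a, ∀ q ∈ Fp a, p.2 = q.2 → p.1 = q.1) → Fp b = SetRel.inv (Fp a))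
    (hw : IsWinRes A B α X Fp σ) : ∃ σ', IsWinRes B A α X Fp σ' := by
  choose! iI hiI using hinv
  refine ⟨fun l => iI (σ l), fun β hβ => ?_⟩
  obtain ⟨hII, hiso⟩ := hw β hβ
  have hF : ∀ n, Fp (iI (σ (histMoves β n))) = SetRel.inv (Fp (σ (histMoves β n))) :=
    fun n => (hiI _ (hII n).1).2 fun p hp q hq =>
      hiso.2.1 p (Set.mem_iUnion.2 ⟨n, hp⟩) q (Set.mem_iUnion.2 ⟨n, hq⟩)
  refine ⟨fun n => ?_, ?_⟩
  · obtain ⟨h1, h2, h3, h4, h5⟩ := hII n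
    refine ⟨(hiI _ h1).1, ?_, ?_, ?_, fun m hm => ?_⟩
    · rw [hF]
      exact fun p hp => (h2 hp).symm
    · rwa [hF, SetRel.fst_image_inv]
    · rwa [hF, SetRel.snd_image_inv]
    · rw [hF, hF]
      exact SetRel.inv_mono (h5 m hm)
  · simp only [hF, ← SetRel.inv_iUnion]
    exact hiso.inv

def IsLegalMove (α : Ordinal.{0}) (X : Ordinal → Set Ordinal) (a : Ordinal) : Prop :=
  a < α ∧ X a ⊆ Set.Iio α

theorem ILegalResAt.isLegalMove {n : ℕ} (h : ILegalResAt α X β n) : IsLegalMove α X (β n) :=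
  ⟨h.1, h.2.1⟩

theorem iLegalResAt_of_eq_union {U : Ordinal → Ordinal → Ordinal}
    (hU : ∀ a < α, ∀ b < α, U a b < α ∧ X (U a b) = X a ∪ X b) {m : ℕ} {x y : Ordinal}
    (hm : β m = U x y) (hx : IsLegalMove α X x) (hy : IsLegalMove α X y)
    (hprev : ∀ k, m = k + 1 → X (β k) ⊆ X x ∪ X y) : ILegalResAt α X β m := by
  obtain ⟨hlt, hXU⟩ := hU x hx.1 y hy.1
  rw [ILegalResAt, hm, hXU]
  exact ⟨hlt, Set.union_subset hx.2 hy.2, hprev⟩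

theorem isLegalMove_getLastD_map_range {k : ℕ} {x : Ordinal}
    (hβ : ∀ m < k, ILegalResAt α X β m) (hx : IsLegalMove α X x) :
    IsLegalMove α X (((List.range k).map β).getLastD x) := by
  rcases List.mem_cons.1 List.getLastD_mem_cons with h | h
  · rwa [h]
  · obtain ⟨m, hm, hmx⟩ := List.mem_map.1 h
    rw [← hmx]
    exact (hβ m (List.mem_range.1 hm)).isLegalMove

theorem IILegalResAt.isLegalMove_dom {D : Ordinal → Ordinal}
    (hD : ∀ a < α, D a < α ∧ X (D a) = Prod.fst '' Fp a) {θ : ℕ → Ordinal} {n : ℕ}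
    (h : IILegalResAt α X Fp β θ n) : IsLegalMove α X (D (θ n)) := by
  refine ⟨(hD _ h.1).1, ?_⟩
  rw [(hD _ h.1).2]
  rintro _ ⟨p, hp, rfl⟩
  exact (h.2.1 hp).1

theorem IILegalResAt.isLegalMove_ran {R : Ordinal → Ordinal}
    (hR : ∀ a < α, R a < α ∧ X (R a) = Prod.snd '' Fp a) {θ : ℕ → Ordinal} {n : ℕ}
    (h : IILegalResAt α X Fp β θ n) : IsLegalMove α X (R (θ n)) := by
  refine ⟨(hR _ h.1).1, ?_⟩
  rw [(hR _ h.1).2]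
  rintro _ ⟨p, hp, rfl⟩
  exact (h.2.1 hp).2

end Game

section Composition

variable (σ₁ σ₂ : List Ordinal.{0} → Ordinal.{0}) (U : Ordinal.{0} → Ordinal.{0} → Ordinal.{0})
  (D R : Ordinal.{0} → Ordinal.{0}) (Cm : Ordinal.{0} → Ordinal.{0} → Ordinal.{0})

/-- One round of the composition strategy (`U`, `D`, `R` give indices of unions, domains and
ranges). `p` holds I's moves so far in the auxiliary games `EF(A, B)` and `EF(B, C)`, `x` is I's
new move in `EF(A, C)`. I plays `u = x ∪ last` in the first game; with II's answer `f` there,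
`x ∪ last ∪ ran f` in the second; with II's answer `g` there, `u ∪ dom g` in the first. This
last move puts `dom g` into the range of II's next answer `f'`, so that `f' ○ g` covers `x` on
both sides. -/
def compStep (p : List Ordinal × List Ordinal) (x : Ordinal) : List Ordinal × List Ordinal :=
  let u := U x (p.1.getLastD x)
  let w := U (U x (p.2.getLastD x)) (R (σ₁ (p.1 ++ [u])))
  (p.1 ++ [u, U u (D (σ₂ (p.2 ++ [w])))], p.2 ++ [w])

def compStrategy (l : List Ordinal) : Ordinal :=
  let p := l.foldl (compStep σ₁ σ₂ U D R) ([], [])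
  Cm (σ₁ p.1) (σ₂ p.2)

/-- `b₁` and `b₂` are I's plays in the two auxiliary games simulated along the play `β`. -/
structure IsAuxPlays (β b₁ b₂ : ℕ → Ordinal) : Prop where
  even : ∀ n, b₁ (2 * n) = U (β n) (((List.range (2 * n)).map b₁).getLastD (β n))
  odd : ∀ n, b₁ (2 * n + 1) = U (b₁ (2 * n)) (D (σ₂ (histMoves b₂ n)))
  second : ∀ n, b₂ n =
    U (U (β n) (((List.range n).map b₂).getLastD (β n))) (R (σ₁ (histMoves b₁ (2 * n))))

theorem exists_isAuxPlays (β : ℕ → Ordinal) :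
    ∃ b₁ b₂, IsAuxPlays σ₁ σ₂ U D R β b₁ b₂ ∧ ∀ n,
      compStrategy σ₁ σ₂ U D R Cm (histMoves β n) =
        Cm (σ₁ (histMoves b₁ (2 * n + 1))) (σ₂ (histMoves b₂ n)) := by
  set S : ℕ → List Ordinal × List Ordinal := fun n =>
    ((List.range n).map β).foldl (compStep σ₁ σ₂ U D R) ([], [])
  have hS : ∀ n, S (n + 1) = compStep σ₁ σ₂ U D R (S n) (β n) := fun n => by
    simp only [S, List.range_succ, List.map_append, List.map_singleton, List.foldl_concat]
  have hlen : ∀ n, (S n).1.length = 2 * n ∧ (S n).2.length = n := fun n => by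
    induction n with
    | zero => simp [S]
    | succ n ih =>
      simp only [hS, compStep, List.length_append, List.length_cons, List.length_nil, ih.1, ih.2,
        and_true]
      omega
  obtain ⟨b₁, hb₁⟩ := List.exists_eq_map_range_of_isPrefix (P := fun n => (S n).1)
    (fun n => by rw [hS]; exact List.prefix_append _ _) (fun n => by simp [hlen]; omega)
  obtain ⟨b₂, hb₂⟩ := List.exists_eq_map_range_of_isPrefix (P := fun n => (S n).2)
    (fun n => by rw [hS]; exact List.prefix_append _ _) (fun n => by simp [hlen])
  simp only [(hlen _).1, (hlen _).2] at hb₁ hb₂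
  have hSn : ∀ n, S n = ((List.range (2 * n)).map b₁, (List.range n).map b₂) :=
    fun n => Prod.ext (hb₁ n) (hb₂ n)
  have hround := fun n => hS n
  simp only [hSn, compStep, Prod.mk.injEq, show ∀ n, 2 * (n + 1) = 2 * n + 1 + 1 by omega,
    List.range_succ, List.map_append, List.append_assoc, List.singleton_append,
    List.append_cancel_left_eq, List.map_cons, List.map_nil, List.cons.injEq, and_true] at hround
  have hmoves : ∀ n, b₁ (2 * n) = U (β n) (((List.range (2 * n)).map b₁).getLastD (β n)) ∧
      b₁ (2 * n + 1) = U (b₁ (2 * n)) (D (σ₂ (histMoves b₂ n))) ∧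
      b₂ n = U (U (β n) (((List.range n).map b₂).getLastD (β n)))
        (R (σ₁ (histMoves b₁ (2 * n)))) := fun n => by
    obtain ⟨⟨h1, h2⟩, h3⟩ := hround n
    rw [← h1] at h2 h3
    rw [← h3] at h2
    simp only [histMoves, List.range_succ, List.map_append, List.map_singleton]
    exact ⟨h1, h2, h3⟩
  refine ⟨b₁, b₂, ⟨fun n => (hmoves n).1, fun n => (hmoves n).2.1, fun n => (hmoves n).2.2⟩,
    fun n => ?_⟩
  change Cm (σ₁ (S (n + 1)).1) (σ₂ (S (n + 1)).2) = _
  rw [hSn, show 2 * (n + 1) = 2 * n + 1 + 1 by ring]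
  rfl

end Composition

structure IsSetOps (α : Ordinal.{0}) (X : Ordinal → Set Ordinal)
    (Fp : Ordinal → Set (Ordinal × Ordinal)) (U : Ordinal → Ordinal → Ordinal)
    (D R : Ordinal → Ordinal) : Prop where
  union : ∀ a < α, ∀ b < α, U a b < α ∧ X (U a b) = X a ∪ X b
  dom : ∀ a < α, D a < α ∧ X (D a) = Prod.fst '' Fp a
  ran : ∀ a < α, R a < α ∧ X (R a) = Prod.snd '' Fp a

section CompositionWins

variable {σ₁ σ₂ : List Ordinal.{0} → Ordinal.{0}} {U : Ordinal.{0} → Ordinal.{0} → Ordinal.{0}}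
  {D R : Ordinal.{0} → Ordinal.{0}} {A B C : L.Structure Ordinal.{0}} {α : Ordinal.{0}}
  {X : Ordinal → Set Ordinal} {Fp : Ordinal → Set (Ordinal × Ordinal)} {β b₁ b₂ : ℕ → Ordinal}

theorem IsAuxPlays.iLegalResAt_even (hb : IsAuxPlays σ₁ σ₂ U D R β b₁ b₂)
    (hops : IsSetOps α X Fp U D R) {n : ℕ}
    (hβ : ILegalResAt α X β n) (hb₁ : ∀ m < 2 * n, ILegalResAt α X b₁ m) :
    ILegalResAt α X b₁ (2 * n) := by
  refine iLegalResAt_of_eq_union hops.union (hb.even n) hβ.isLegalMove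
    (isLegalMove_getLastD_map_range hb₁ hβ.isLegalMove) fun k hk => ?_
  rw [hk, List.getLastD_map_range_succ]
  exact Set.subset_union_right

theorem IsAuxPlays.iLegalResAt_second (hb : IsAuxPlays σ₁ σ₂ U D R β b₁ b₂)
    (hops : IsSetOps α X Fp U D R)
    (h₁ : IsWinRes A B α X Fp σ₁) {n : ℕ} (hβ : ILegalResAt α X β n)
    (hb₁ : ∀ m ≤ 2 * n, ILegalResAt α X b₁ m) (hb₂ : ∀ m < n, ILegalResAt α X b₂ m) :
    ILegalResAt α X b₂ n := by
  have hd := isLegalMove_getLastD_map_range hb₂ hβ.isLegalMove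
  have hxd := hops.union _ hβ.1 _ hd.1
  refine iLegalResAt_of_eq_union hops.union (hb.second n)
    ⟨hxd.1, hxd.2 ▸ Set.union_subset hβ.2.1 hd.2⟩
    ((h₁.iiLegalResAt hb₁).isLegalMove_ran hops.ran) fun k hk => ?_
  rw [hxd.2, hk, List.getLastD_map_range_succ]
  exact Set.subset_union_right.trans Set.subset_union_left

theorem IsAuxPlays.iLegalResAt_odd (hb : IsAuxPlays σ₁ σ₂ U D R β b₁ b₂)
    (hops : IsSetOps α X Fp U D R)
    (h₂ : IsWinRes B C α X Fp σ₂) {n : ℕ} (hb₁ : ILegalResAt α X b₁ (2 * n))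
    (hb₂ : ∀ m ≤ n, ILegalResAt α X b₂ m) :
    ILegalResAt α X b₁ (2 * n + 1) := by
  refine iLegalResAt_of_eq_union hops.union (hb.odd n) hb₁.isLegalMove
    ((h₂.iiLegalResAt hb₂).isLegalMove_dom hops.dom) fun k hk => ?_
  rw [show k = 2 * n by omega]
  exact Set.subset_union_left

theorem IsAuxPlays.iLegalResAt (hb : IsAuxPlays σ₁ σ₂ U D R β b₁ b₂)
    (hops : IsSetOps α X Fp U D R)
    (h₁ : IsWinRes A B α X Fp σ₁) (h₂ : IsWinRes B C α X Fp σ₂)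
    (hβ : ∀ n, ILegalResAt α X β n) :
    (∀ m, ILegalResAt α X b₁ m) ∧ ∀ m, ILegalResAt α X b₂ m := by
  have hrounds : ∀ n, (∀ m < 2 * n, ILegalResAt α X b₁ m) ∧ ∀ m < n, ILegalResAt α X b₂ m := by
    intro n
    induction n with
    | zero => simp
    | succ n ih =>
      have heven := hb.iLegalResAt_even hops (hβ n) ih.1
      have hb₁ : ∀ m < 2 * n + 1, ILegalResAt α X b₁ m :=
        Nat.forall_lt_succ_right.2 ⟨ih.1, heven⟩
      have hb₂ : ∀ m < n + 1, ILegalResAt α X b₂ m :=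
        Nat.forall_lt_succ_right.2 ⟨ih.2, hb.iLegalResAt_second hops h₁ (hβ n)
          (fun m hm => hb₁ m (Nat.lt_succ_of_le hm)) ih.2⟩
      have hodd := hb.iLegalResAt_odd hops h₂ heven fun m hm => hb₂ m (Nat.lt_succ_of_le hm)
      exact ⟨Nat.forall_lt_succ_right.2 ⟨hb₁, hodd⟩, hb₂⟩
  exact ⟨fun m => (hrounds (m + 1)).1 m (by omega), fun m => (hrounds (m + 1)).2 m (by omega)⟩

theorem IsAuxPlays.subset_moves (hb : IsAuxPlays σ₁ σ₂ U D R β b₁ b₂)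
    (hops : IsSetOps α X Fp U D R)
    (h₁ : IsWinRes A B α X Fp σ₁) (h₂ : IsWinRes B C α X Fp σ₂)
    (hβ : ∀ n, ILegalResAt α X β n) (hb₁ : ∀ m, ILegalResAt α X b₁ m)
    (hb₂ : ∀ m, ILegalResAt α X b₂ m) (n : ℕ) :
    X (β n) ⊆ X (b₁ (2 * n)) ∧ X (β n) ⊆ X (b₂ n) ∧
      Prod.snd '' Fp (σ₁ (histMoves b₁ (2 * n))) ⊆ X (b₂ n) ∧
      Prod.fst '' Fp (σ₂ (histMoves b₂ n)) ⊆ X (b₁ (2 * n + 1)) := by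
  have hd₁ := isLegalMove_getLastD_map_range (fun m _ => hb₁ m) (hβ n).isLegalMove (k := 2 * n)
  have hd₂ := isLegalMove_getLastD_map_range (fun m _ => hb₂ m) (hβ n).isLegalMove (k := n)
  have hθ₁ := ((h₁ b₁ hb₁).1 (2 * n)).1
  have hθ₂ := ((h₂ b₂ hb₂).1 n).1
  have hxd₂ := hops.union _ (hβ n).1 _ hd₂.1
  refine ⟨?_, ?_, ?_, ?_⟩
  · rw [hb.even n, (hops.union _ (hβ n).1 _ hd₁.1).2]
    exact Set.subset_union_left
  · rw [hb.second n, (hops.union _ hxd₂.1 _ (hops.ran _ hθ₁).1).2, hxd₂.2]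
    exact Set.subset_union_left.trans Set.subset_union_left
  · rw [hb.second n, (hops.union _ hxd₂.1 _ (hops.ran _ hθ₁).1).2, (hops.ran _ hθ₁).2]
    exact Set.subset_union_right
  · rw [hb.odd n, (hops.union _ (hb₁ _).1 _ (hops.dom _ hθ₂).1).2, (hops.dom _ hθ₂).2]
    exact Set.subset_union_right

theorem isWinRes_compStrategy (Cm : Ordinal.{0} → Ordinal.{0} → Ordinal.{0})
    (hops : IsSetOps α X Fp U D R)
    (hC : ∀ a < α, ∀ b < α, Cm a b < α ∧ Fp (Cm a b) = Fp a ○ Fp b)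
    (h₁ : IsWinRes A B α X Fp σ₁) (h₂ : IsWinRes B C α X Fp σ₂) :
    IsWinRes A C α X Fp (compStrategy σ₁ σ₂ U D R Cm) := by
  intro β hβ
  obtain ⟨b₁, b₂, hb, hτ⟩ := exists_isAuxPlays σ₁ σ₂ U D R Cm β
  obtain ⟨hleg₁, hleg₂⟩ := hb.iLegalResAt hops h₁ h₂ hβ
  obtain ⟨hII₁, hiso₁⟩ := h₁ b₁ hleg₁
  obtain ⟨hII₂, hiso₂⟩ := h₂ b₂ hleg₂
  have hsub := hb.subset_moves hops h₁ h₂ hβ hleg₁ hleg₂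
  set f : ℕ → SetRel Ordinal Ordinal := fun k => Fp (σ₁ (histMoves b₁ k))
  set g : ℕ → SetRel Ordinal Ordinal := fun k => Fp (σ₂ (histMoves b₂ k))
  have hf : ∀ k, f k ⊆ f (k + 1) := fun k => (hII₁ (k + 1)).2.2.2.2 k rfl
  have hF : ∀ n, Fp (compStrategy σ₁ σ₂ U D R Cm (histMoves β n)) = f (2 * n + 1) ○ g n :=
    fun n => by rw [hτ]; exact (hC _ (hII₁ _).1 _ (hII₂ _).1).2
  refine ⟨fun n => ⟨?_, ?_, ?_, ?_, fun m hm => ?_⟩, ?_⟩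
  · beta_reduce
    rw [hτ]
    exact (hC _ (hII₁ _).1 _ (hII₂ _).1).1
  · rw [hF]
    rintro ⟨a, c⟩ ⟨b, hab, hbc⟩
    exact ⟨((hII₁ _).2.1 hab).1, ((hII₂ _).2.1 hbc).2⟩
  · rw [hF]
    intro x hx
    obtain ⟨⟨x, y⟩, hxy, rfl⟩ := (hII₁ (2 * n)).2.2.1 ((hsub n).1 hx)
    obtain ⟨⟨y, z⟩, hyz, rfl⟩ := (hII₂ n).2.2.1 ((hsub n).2.2.1 ⟨_, hxy, rfl⟩)
    exact ⟨(x, z), ⟨y, hf _ hxy, hyz⟩, rfl⟩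
  · rw [hF]
    intro z hz
    obtain ⟨⟨y, z⟩, hyz, rfl⟩ := (hII₂ n).2.2.2.1 ((hsub n).2.1 hz)
    obtain ⟨⟨x, y⟩, hxy, rfl⟩ := (hII₁ (2 * n + 1)).2.2.2.1 ((hsub n).2.2.2 ⟨_, hyz, rfl⟩)
    exact ⟨(x, z), ⟨y, hxy, hyz⟩, rfl⟩
  · subst hm
    rw [hF, hF]
    exact SetRel.comp_subset_comp ((hf _).trans (hf _)) ((hII₂ (m + 1)).2.2.2.2 m rfl)
  · refine (hiso₁.comp hiso₂).mono (Set.iUnion_subset fun n => ?_)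
    rw [hF]
    exact SetRel.comp_subset_comp (Set.subset_iUnion f _) (Set.subset_iUnion g _)

end CompositionWins


structure EnumClosed (X : Ordinal → Set Ordinal) (Fp : Ordinal → Set (Ordinal × Ordinal))
    (α : Ordinal.{0}) : Prop where
  diag : ∀ a < α, ∃ b < α, Fp b = (fun x => (x, x)) '' X a
  inv : ∀ a < α, ∃ b < α,
    (∀ p ∈ Fp a, ∀ q ∈ Fp a, p.2 = q.2 → p.1 = q.1) → Fp b = SetRel.inv (Fp a)
  comp : ∀ a < α, ∀ b < α, ∃ c < α, Fp c = Fp a ○ Fp b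
  union : ∀ a < α, ∀ b < α, ∃ c < α, X c = X a ∪ X b
  dom : ∀ a < α, ∃ b < α, X b = Prod.fst '' Fp a
  ran : ∀ a < α, ∃ b < α, X b = Prod.snd '' Fp a

section EnumClosed

variable {A B C : L.Structure Ordinal.{0}} {α : Ordinal.{0}} {X : Ordinal → Set Ordinal}
  {Fp : Ordinal → Set (Ordinal × Ordinal)}

theorem EnumClosed.exists_isWinRes_comp (hα : EnumClosed X Fp α) {σ₁ σ₂ : List Ordinal → Ordinal}
    (h₁ : IsWinRes A B α X Fp σ₁) (h₂ : IsWinRes B C α X Fp σ₂) :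
    ∃ σ, IsWinRes A C α X Fp σ := by
  choose! U hU using hα.union
  choose! D hD using hα.dom
  choose! R hR using hα.ran
  choose! Cm hC using hα.comp
  exact ⟨_, isWinRes_compStrategy Cm ⟨hU, hD, hR⟩ hC h₁ h₂⟩

theorem EnumClosed.equivalence_REF (hα : EnumClosed X Fp α) (ar : ℕ → ℕ)
    (π : ℕ × List Ordinal → Ordinal) (T : (Lang ar).Theory) :
    Equivalence (REF ar π T X Fp α) where
  refl η := by
    by_cases h : ModelsRes ar π T η α
    · exact Or.inr ⟨h, h, exists_isWinRes_self hα.diag _⟩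
    · exact Or.inl ⟨h, h⟩
  symm := by
    rintro η ξ (⟨h₁, h₂⟩ | ⟨h₁, h₂, σ, hσ⟩)
    · exact Or.inl ⟨h₂, h₁⟩
    · exact Or.inr ⟨h₂, h₁, hσ.exists_symm hα.inv⟩
  trans := by
    rintro η ξ ζ (⟨h₁, h₂⟩ | ⟨h₁, h₂, σ, hσ⟩) (⟨h₃, h₄⟩ | ⟨h₃, h₄, τ, hτ⟩)
    · exact Or.inl ⟨h₁, h₄⟩
    · exact absurd h₃ h₂
    · exact absurd h₂ h₃
    · exact Or.inr ⟨h₁, h₄, hα.exists_isWinRes_comp hσ hτ⟩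

/-- `H` is the maximum of Skolem functions for the closure properties at `o`. -/
theorem EnumClosed.exists_closureFn {o : Ordinal.{0}} (h : EnumClosed X Fp o) :
    ∃ H : Ordinal → Ordinal → Ordinal, (∀ a < o, ∀ b < o, H a b < o) ∧
      ∀ α ≤ o, (∀ a < α, ∀ b < α, H a b < α) → EnumClosed X Fp α := by
  choose! iD hiD using h.diag
  choose! iI hiI using h.inv
  choose! iC hiC using h.comp
  choose! iU hiU using h.union
  choose! iDom hiDom using h.dom
  choose! iRan hiRan using h.ran
  set H : Ordinal → Ordinal → Ordinal := fun a b =>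
    max (max (iD a) (iI a)) (max (max (iC a b) (iU a b)) (max (iDom a) (iRan a)))
  have hle : ∀ a b, iD a ≤ H a b ∧ iI a ≤ H a b ∧ iC a b ≤ H a b ∧ iU a b ≤ H a b ∧
      iDom a ≤ H a b ∧ iRan a ≤ H a b := by
    simp [H]
  refine ⟨H, fun a ha b hb => ?_, fun α hαo hα => ⟨?_, ?_, ?_, ?_, ?_, ?_⟩⟩
  · simp only [H, max_lt_iff]
    exact ⟨⟨(hiD a ha).1, (hiI a ha).1⟩, ⟨(hiC a ha b hb).1, (hiU a ha b hb).1⟩,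
      (hiDom a ha).1, (hiRan a ha).1⟩
  · exact fun a ha => ⟨_, (hle a a).1.trans_lt (hα a ha a ha), (hiD a (ha.trans_le hαo)).2⟩
  · exact fun a ha => ⟨_, (hle a a).2.1.trans_lt (hα a ha a ha), (hiI a (ha.trans_le hαo)).2⟩
  · exact fun a ha b hb => ⟨_, (hle a b).2.2.1.trans_lt (hα a ha b hb),
      (hiC a (ha.trans_le hαo) b (hb.trans_le hαo)).2⟩
  · exact fun a ha b hb => ⟨_, (hle a b).2.2.2.1.trans_lt (hα a ha b hb),
      (hiU a (ha.trans_le hαo) b (hb.trans_le hαo)).2⟩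
  · exact fun a ha => ⟨_, (hle a a).2.2.2.2.1.trans_lt (hα a ha a ha),
      (hiDom a (ha.trans_le hαo)).2⟩
  · exact fun a ha => ⟨_, (hle a a).2.2.2.2.2.trans_lt (hα a ha a ha),
      (hiRan a (ha.trans_le hαo)).2⟩

end EnumClosed

theorem GoodEnum.enumClosed {κ : Cardinal.{0}} {X : Ordinal → Set Ordinal}
    {Fp : Ordinal → Set (Ordinal × Ordinal)} (hκ : ℵ₀ ≤ κ) (hE : GoodEnum κ X Fp) :
    EnumClosed X Fp κ.ord := by
  obtain ⟨hX, hXsurj, hF, hFsurj⟩ := hE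
  have hκ' : ℵ₀ ≤ Cardinal.lift.{1} κ := Cardinal.aleph0_le_lift.2 hκ
  have hdom : ∀ a < κ.ord, Prod.fst '' Fp a ⊆ Set.Iio κ.ord := fun a ha =>
    Set.image_subset_iff.2 fun p hp => ((hF a ha).1 hp).1
  have hran : ∀ a < κ.ord, Prod.snd '' Fp a ⊆ Set.Iio κ.ord := fun a ha =>
    Set.image_subset_iff.2 fun p hp => ((hF a ha).1 hp).2
  refine ⟨fun a ha => ?_, fun a ha => ?_, fun a ha b hb => ?_, fun a ha b hb => ?_,
    fun a ha => ?_, fun a ha => ?_⟩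
  · refine hFsurj _ ?_ (Cardinal.mk_image_le.trans_lt (hX a ha).2) ?_
    · rintro _ ⟨x, hx, rfl⟩
      exact ⟨(hX a ha).1 hx, (hX a ha).1 hx⟩
    · rintro _ ⟨x, -, rfl⟩ _ ⟨y, -, rfl⟩ hxy
      exact hxy
  · by_cases hinj : ∀ p ∈ Fp a, ∀ q ∈ Fp a, p.2 = q.2 → p.1 = q.1
    · obtain ⟨b, hb, hFb⟩ := hFsurj (SetRel.inv (Fp a))
        (fun p hp => ⟨((hF a ha).1 hp).2, ((hF a ha).1 hp).1⟩)
        ((SetRel.mk_inv _).trans_lt (hF a ha).2.1) (fun p hp q hq => hinj _ hp _ hq)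
      exact ⟨b, hb, fun _ => hFb⟩
    · exact ⟨a, ha, fun h => absurd h hinj⟩
  · have hfun := SetRel.functional_comp (hF a ha).2.2 (hF b hb).2.2
    refine hFsurj _ ?_ ((SetRel.mk_comp_le hfun).trans_lt (hF a ha).2.1) hfun
    rintro ⟨x, z⟩ ⟨y, hxy, hyz⟩
    exact ⟨((hF a ha).1 hxy).1, ((hF b hb).1 hyz).2⟩
  · exact hXsurj _ (Set.union_subset (hX a ha).1 (hX b hb).1)
      ((Cardinal.mk_union_le _ _).trans_lt (Cardinal.add_lt_of_lt hκ' (hX a ha).2 (hX b hb).2))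
  · exact hXsurj _ (hdom a ha) (Cardinal.mk_image_le.trans_lt (hF a ha).2.1)
  · exact hXsurj _ (hran a ha) (Cardinal.mk_image_le.trans_lt (hF a ha).2.1)

section Club

variable {κ : Cardinal.{0}} {H : Ordinal.{0} → Ordinal.{0} → Ordinal.{0}}

theorem exists_closurePoint_gt (hκ : κ.IsRegular) (hκω : ℵ₀ < κ)
    (hH : ∀ a < κ.ord, ∀ b < κ.ord, H a b < κ.ord) {β : Ordinal.{0}} (hβ : β < κ.ord) :
    ∃ α, α < κ.ord ∧ β < α ∧ ∀ a < α, ∀ b < α, H a b < α := by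
  have hcard : ∀ x < κ.ord,
      Cardinal.lift.{0} #(Set.Iio x) < (Ordinal.lift.{1} κ.ord).cof := fun x hx => by
    rwa [← Ordinal.lift_cof, hκ.cof_ord, Cardinal.mk_Iio_ordinal, Cardinal.lift_lift,
      Cardinal.lift_lt, ← Cardinal.lt_ord]
  set N : Ordinal → Ordinal := fun x => ⨆ a : Set.Iio x, ⨆ b : Set.Iio x, H a b + 1
  have hN : ∀ x < κ.ord, N x < κ.ord := fun x hx =>
    Ordinal.lift_iSup_lt_of_lt_cof (hcard x hx) fun a =>
      Ordinal.lift_iSup_add_one_lt_of_lt_cof (hcard x hx) fun b =>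
        hH _ (a.2.trans hx) _ (b.2.trans hx)
  have hHN : ∀ x, ∀ a < x, ∀ b < x, H a b < N x := fun x a ha b hb =>
    (Order.lt_add_one_iff.2 le_rfl).trans_le <|
      (Ordinal.le_iSup (fun b : Set.Iio x => H a b + 1) ⟨b, hb⟩).trans
        (Ordinal.le_iSup (fun a : Set.Iio x => ⨆ b : Set.Iio x, H a b + 1) ⟨a, ha⟩)
  set f : Ordinal → Ordinal := fun x => max x (N x)
  have hf : Monotone fun k => f^[k] (Order.succ β) := fun i j hij =>
    Function.monotone_iterate_of_id_le (fun x => le_max_left _ _) hij _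
  refine ⟨Ordinal.nfp f (Order.succ β),
    Ordinal.nfp_lt_ord (by rwa [hκ.cof_ord]) (fun x hx => max_lt hx (hN x hx))
      ((Cardinal.isSuccLimit_ord hκω.le).succ_lt hβ),
    (Order.lt_succ β).trans_le (Ordinal.le_nfp _ _), fun a ha b hb => ?_⟩
  obtain ⟨i, hi⟩ := Ordinal.lt_nfp_iff.1 ha
  obtain ⟨j, hj⟩ := Ordinal.lt_nfp_iff.1 hb
  calc H a b < N (f^[max i j] (Order.succ β)) :=
        hHN _ a (hi.trans_le (hf (le_max_left i j))) b (hj.trans_le (hf (le_max_right i j)))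
    _ ≤ f^[max i j + 1] (Order.succ β) := by
        rw [Function.iterate_succ_apply']
        exact le_max_right _ _
    _ ≤ Ordinal.nfp f (Order.succ β) := Ordinal.iterate_le_nfp _ _ _

theorem isClubIn_closurePoints (hκ : κ.IsRegular) (hκω : ℵ₀ < κ)
    (hH : ∀ a < κ.ord, ∀ b < κ.ord, H a b < κ.ord) :
    IsClubIn κ {α | α < κ.ord ∧ ∀ a < α, ∀ b < α, H a b < α} := by
  refine ⟨fun α hα => hα.1, fun β hβ => ?_, fun B hB hBne hBlt => ?_⟩
  · obtain ⟨α, hα, hβα, hαH⟩ := exists_closurePoint_gt hκ hκω hH hβ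
    exact ⟨α, ⟨hα, hαH⟩, hβα⟩
  have hbdd : BddAbove B := ⟨κ.ord, fun x hx => (hB hx).1.le⟩
  refine ⟨hBlt, fun a ha b hb => ?_⟩
  obtain ⟨x, hx, hax⟩ := (lt_csSup_iff hbdd hBne).1 ha
  obtain ⟨y, hy, hby⟩ := (lt_csSup_iff hbdd hBne).1 hb
  have hxy : max x y ∈ B := by
    rcases max_choice x y with h | h <;> rw [h] <;> assumption
  exact ((hB hxy).2 a (hax.trans_le (le_max_left _ _)) b (hby.trans_le (le_max_right _ _))).trans_le
    (le_csSup hbdd hxy)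

end Club

theorem REF_equivalence_club_general (κ : Cardinal.{0}) (hκ : κ.IsRegular) (hκω : ℵ₀ < κ)
    (ar : ℕ → ℕ) (π : ℕ × List Ordinal → Ordinal)
    (T : (Lang ar).Theory)
    (X : Ordinal → Set Ordinal) (Fp : Ordinal → Set (Ordinal × Ordinal))
    (hEnum : GoodEnum κ X Fp) :
    ∃ C : Set Ordinal, IsClubIn κ C ∧
      ∀ α ∈ C, Equivalence (REF ar π T X Fp α) := by
  obtain ⟨H, hH, hclosed⟩ := (hEnum.enumClosed hκω.le).exists_closureFn
  exact ⟨_, isClubIn_closurePoints hκ hκω hH, fun α hα =>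
    (hclosed α hα.1.le hα.2).equivalence_REF ar π T⟩

/-- For a complete first-order theory `T` in a countable relational vocabulary,
there are club-many `α < κ` such that `R_EF^α` is an equivalence relation. -/
theorem REF_equivalence_club (κ : Cardinal.{0}) (hκ : κ.IsRegular) (hκω : ℵ₀ < κ)
    (hκpow : ∀ lam < κ, ℵ₀ ≤ lam → κ ^ lam = κ)
    (ar : ℕ → ℕ) (π : ℕ × List Ordinal → Ordinal)
    (hπlt : ∀ (m : ℕ) (l : List Ordinal), (∀ x ∈ l, x < κ.ord) → π (m, l) < κ.ord)
    (hπinj : Function.Injective π)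
    (hπsurj : ∀ β < κ.ord, ∃ (m : ℕ) (l : List Ordinal), (∀ x ∈ l, x < κ.ord) ∧ π (m, l) = β)
    (T : (Lang ar).Theory) (hT : T.IsComplete)
    (X : Ordinal → Set Ordinal) (Fp : Ordinal → Set (Ordinal × Ordinal))
    (hEnum : GoodEnum κ X Fp) :
    ∃ C : Set Ordinal, IsClubIn κ C ∧
      ∀ α ∈ C, Equivalence (REF ar π T X Fp α) :=
  REF_equivalence_club_general κ hκ hκω ar π T X Fp hEnum
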